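/- For every fixed vector f ∈ ℝ³, the matrix-valued kernel ŷ ↦ M(ŷ, f) := (1/2)( ŷ⊗(ŷ×f) + (ŷ×f)⊗ŷ ) has zero mean over the unit sphere: ∫_{S²} M(ŷ, f) dσ(ŷ) = 0, where dσ is the surface measure on the unit sphere S² ⊂ ℝ³ and the integral is taken componentwise. -/

import Mathlib

/-!
The surface measure on the unit sphere is invariant under linear isometries. Reflecting in the
hyperplane orthogonal to `u` shows that `∫ ⟪u, y⟫ ⟪v, y⟫ dσ = 0` whenever `u ⟂ v`, and the
reflection exchanging two unit vectors shows that all `∫ ⟪u, y⟫² dσ` with `‖u‖ = 1` agree; since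
`∑ₐ yₐ² = 1`, the second-moment matrix of `σ` on `Sⁿ⁻¹` is `σ(Sⁿ⁻¹)/n · I`. Writing
`(ŷ × f)_j = (f × e_j) ⬝ ŷ`, the mean of `M(ŷ, f)_{ij}` is therefore
`σ(S²)/6 · ((f × e_j)_i + (f × e_i)_j)`, which vanishes because `(f × e_j)_i = e_i ⬝ (f × e_j)`
is antisymmetric in `i, j`.
-/

open MeasureTheory

noncomputable section

/-- The cross product on `ℝ³`. -/
def cross3 (a b : Fin 3 → ℝ) : Fin 3 → ℝ :=
  ![a 1 * b 2 - a 2 * b 1, a 2 * b 0 - a 0 * b 2, a 0 * b 1 - a 1 * b 0]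

/-- The symmetric matrix kernel `M(ŷ, f) = (1/2)(ŷ⊗(ŷ×f) + (ŷ×f)⊗ŷ)`. -/
def Mker (yhat : Fin 3 → ℝ) (f : Fin 3 → ℝ) : Matrix (Fin 3) (Fin 3) ℝ :=
  fun i j => (1 / 2) * (yhat i * cross3 yhat f j + cross3 yhat f i * yhat j)

open Metric Set Matrix
open scoped Pointwise RealInnerProductSpace

theorem image_smul_eq_smul_image {E F 𝓕 : Type*} [AddCommMonoid E] [Module ℝ E]
    [AddCommMonoid F] [Module ℝ F] [FunLike 𝓕 E F] [LinearMapClass 𝓕 ℝ E F] (f : 𝓕)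
    (t : Set ℝ) (s : Set E) : f '' (t • s) = t • f '' s := by
  simp_rw [← image2_smul]
  exact image_image2_distrib_right (map_smul f)

theorem Submodule.inner_reflection_right {E : Type*} [NormedAddCommGroup E]
    [InnerProductSpace ℝ E] (K : Submodule ℝ E) [K.HasOrthogonalProjection] (u y : E) :
    ⟪u, K.reflection y⟫ = ⟪K.reflection u, y⟫ := by
  rw [← K.reflection.inner_map_map, K.reflection_reflection]

section NormedSpace

variable {E : Type*} [NormedAddCommGroup E] [NormedSpace ℝ E] [MeasurableSpace E] [BorelSpace E]

namespace LinearIsometryEquiv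

def sphereMeasurableEquiv (e : E ≃ₗᵢ[ℝ] E) : sphere (0 : E) 1 ≃ᵐ sphere (0 : E) 1 :=
  (e.toHomeomorph.subtype fun x => by simp).toMeasurableEquiv

@[simp]
theorem coe_sphereMeasurableEquiv_apply (e : E ≃ₗᵢ[ℝ] E) (y : sphere (0 : E) 1) :
    (e.sphereMeasurableEquiv y : E) = e y :=
  rfl

theorem measurePreserving_sphereMeasurableEquiv {μ : Measure E} (e : E ≃ₗᵢ[ℝ] E)
    (he : MeasurePreserving e μ μ) :
    MeasurePreserving e.sphereMeasurableEquiv μ.toSphere μ.toSphere := by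
  refine ⟨e.sphereMeasurableEquiv.measurable, Measure.ext fun s hs => ?_⟩
  have hval : ((↑) '' (e.sphereMeasurableEquiv ⁻¹' s) : Set E) = e.symm '' ((↑) '' s) := by
    rw [← MeasurableEquiv.image_symm, image_image, image_image]
    rfl
  have he' : MeasurePreserving e.toHomeomorph.toMeasurableEquiv μ μ := he
  rw [MeasurableEquiv.map_apply, Measure.toSphere_apply' _ (e.sphereMeasurableEquiv.measurable hs),
    Measure.toSphere_apply' _ hs, hval, ← image_smul_eq_smul_image,
    e.symm.image_eq_preimage_symm, e.symm_symm]
  exact congrArg _ (he'.measure_preimage_equiv _)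

end LinearIsometryEquiv

theorem Continuous.integrable_toSphere [FiniteDimensional ℝ E] {F : Type*} [NormedAddCommGroup F]
    {μ : Measure E} [μ.IsAddHaarMeasure] {f : sphere (0 : E) 1 → F} (hf : Continuous f) :
    Integrable f μ.toSphere :=
  hf.integrable_of_hasCompactSupport (.of_compactSpace f)

end NormedSpace

section InnerProductSpace

variable {E : Type*} [NormedAddCommGroup E] [InnerProductSpace ℝ E] [FiniteDimensional ℝ E]
  [MeasurableSpace E] [BorelSpace E]

theorem integral_comp_sphereMeasurableEquiv (e : E ≃ₗᵢ[ℝ] E) (g : sphere (0 : E) 1 → ℝ) :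
    ∫ y, g (e.sphereMeasurableEquiv y) ∂(volume : Measure E).toSphere =
      ∫ y, g y ∂(volume : Measure E).toSphere :=
  (e.measurePreserving_sphereMeasurableEquiv e.measurePreserving).integral_comp' g

theorem integral_inner_mul_inner_toSphere_of_inner_eq_zero {u v : E} (huv : ⟪u, v⟫ = 0) :
    ∫ y : sphere (0 : E) 1, ⟪u, y⟫ * ⟪v, y⟫ ∂(volume : Measure E).toSphere = 0 := by
  have hu : (ℝ ∙ u)ᗮ.reflection u = -u := Submodule.reflection_orthogonalComplement_singleton_eq_neg u
  have hv : (ℝ ∙ u)ᗮ.reflection v = v := Submodule.reflection_mem_subspace_eq_self <|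
    Submodule.mem_orthogonal_singleton_iff_inner_right.2 huv
  have h := integral_comp_sphereMeasurableEquiv (ℝ ∙ u)ᗮ.reflection
    fun y => ⟪u, (y : E)⟫ * ⟪v, (y : E)⟫
  simp only [LinearIsometryEquiv.coe_sphereMeasurableEquiv_apply, Submodule.inner_reflection_right,
    hu, hv, inner_neg_left, neg_mul, integral_neg] at h
  linarith

theorem integral_inner_sq_toSphere_eq_of_norm_eq {u v : E} (huv : ‖u‖ = ‖v‖) :
    ∫ y : sphere (0 : E) 1, ⟪u, y⟫ ^ 2 ∂(volume : Measure E).toSphere =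
      ∫ y : sphere (0 : E) 1, ⟪v, y⟫ ^ 2 ∂(volume : Measure E).toSphere := by
  have h := integral_comp_sphereMeasurableEquiv (ℝ ∙ (u - v))ᗮ.reflection
    fun y => ⟪u, (y : E)⟫ ^ 2
  simpa only [LinearIsometryEquiv.coe_sphereMeasurableEquiv_apply,
    Submodule.inner_reflection_right, Submodule.reflection_sub huv] using h.symm

end InnerProductSpace

section EuclideanSpace

variable {ι : Type*} [Fintype ι] [DecidableEq ι]

local notation "σ" => Measure.toSphere (volume : Measure (EuclideanSpace ℝ ι))

theorem integral_coord_mul_coord_toSphere (a b : ι) :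
    ∫ y : sphere (0 : EuclideanSpace ℝ ι) 1, y.1 a * y.1 b ∂σ =
      if a = b then Measure.real σ univ / Fintype.card ι else 0 := by
  have hcoord (c : ι) (y : EuclideanSpace ℝ ι) : y c = ⟪EuclideanSpace.single c 1, y⟫ := by
    simp [EuclideanSpace.inner_single_left]
  split_ifs with hab
  · subst hab
    have hdiag (c : ι) : ∫ y : sphere (0 : EuclideanSpace ℝ ι) 1, y.1 c * y.1 c ∂σ =
        ∫ y : sphere (0 : EuclideanSpace ℝ ι) 1, y.1 a * y.1 a ∂σ := by
      simp_rw [← sq, hcoord]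
      exact integral_inner_sq_toSphere_eq_of_norm_eq (by simp)
    have htrace :
        ∑ c, ∫ y : sphere (0 : EuclideanSpace ℝ ι) 1, y.1 c * y.1 c ∂σ = Measure.real σ univ := by
      rw [← integral_finsetSum _ fun c _ => (by fun_prop : Continuous _).integrable_toSphere]
      simp_rw [← sq, ← EuclideanSpace.real_norm_sq_eq]
      simp [norm_eq_of_mem_sphere]
    simp only [hdiag, Finset.sum_const, Finset.card_univ, nsmul_eq_mul] at htrace
    have hcard : (Fintype.card ι : ℝ) ≠ 0 := by
      have : Nonempty ι := ⟨a⟩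
      exact Nat.cast_ne_zero.2 Fintype.card_ne_zero
    rw [eq_div_iff hcard, ← htrace, mul_comm]
  · simp_rw [hcoord]
    exact integral_inner_mul_inner_toSphere_of_inner_eq_zero
      (by simp [EuclideanSpace.inner_single_left, Ne.symm hab])

theorem integral_coord_mul_dotProduct_toSphere (u : ι → ℝ) (a : ι) :
    ∫ y : sphere (0 : EuclideanSpace ℝ ι) 1, y.1 a * (u ⬝ᵥ y.1.ofLp) ∂σ =
      Measure.real σ univ / Fintype.card ι * u a := by
  simp_rw [dotProduct, Finset.mul_sum]
  rw [integral_finsetSum _ fun b _ => (by fun_prop : Continuous _).integrable_toSphere]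
  simp_rw [mul_left_comm _ (u _), integral_const_mul, integral_coord_mul_coord_toSphere, mul_ite,
    mul_zero, Finset.sum_ite_eq, Finset.mem_univ, if_true]
  ring

end EuclideanSpace

theorem crossProduct_apply_eq_dotProduct {R : Type*} [CommRing R] (v w : Fin 3 → R) (j : Fin 3) :
    (v ⨯₃ w) j = (w ⨯₃ Pi.single j 1) ⬝ᵥ v := by
  rw [dotProduct_comm, ← triple_product_permutation, single_dotProduct, one_mul]

theorem crossProduct_single_apply_swap {R : Type*} [CommRing R] (w : Fin 3 → R) (i j : Fin 3) :
    (w ⨯₃ Pi.single j 1) i = -(w ⨯₃ Pi.single i 1) j := by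
  have h (a b : Fin 3) : (w ⨯₃ Pi.single b 1) a = w ⬝ᵥ Pi.single b 1 ⨯₃ Pi.single a 1 := by
    rw [← triple_product_permutation, single_dotProduct, one_mul]
  rw [h, h, ← cross_anticomm, dotProduct_neg]

theorem integral_coord_mul_crossProduct_toSphere (w : Fin 3 → ℝ) (a b : Fin 3) :
    ∫ y : sphere (0 : EuclideanSpace ℝ (Fin 3)) 1, y.1 a * (y.1.ofLp ⨯₃ w) b
        ∂(volume : Measure (EuclideanSpace ℝ (Fin 3))).toSphere =
      Measure.real (volume : Measure (EuclideanSpace ℝ (Fin 3))).toSphere univ / 3 *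
        (w ⨯₃ Pi.single b 1) a := by
  simp_rw [crossProduct_apply_eq_dotProduct _ w]
  simpa using integral_coord_mul_dotProduct_toSphere (w ⨯₃ Pi.single b 1) a

theorem cross3_eq_crossProduct (a b : Fin 3 → ℝ) : cross3 a b = a ⨯₃ b := by
  rw [cross_apply]
  rfl

/-- For every fixed `f ∈ ℝ³`, the matrix-valued kernel
`ŷ ↦ M(ŷ, f) = (1/2)(ŷ⊗(ŷ×f) + (ŷ×f)⊗ŷ)` has zero mean over the unit sphere
`S² ⊂ ℝ³` with respect to the surface measure (componentwise). -/
theorem M_kernel_zero_mean_on_sphere (f : EuclideanSpace ℝ (Fin 3)) :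
    ∀ i j : Fin 3,
      ∫ y : Metric.sphere (0 : EuclideanSpace ℝ (Fin 3)) 1,
          Mker (fun k => (y : EuclideanSpace ℝ (Fin 3)) k) (fun k => f k) i j
          ∂((volume : Measure (EuclideanSpace ℝ (Fin 3))).toSphere) = 0 := by
  intro i j
  have hcross : Continuous fun v : Fin 3 → ℝ => v ⨯₃ f.ofLp :=
    (crossProduct.flip f.ofLp).continuous_of_finiteDimensional
  have hint (a b : Fin 3) :
      Integrable (fun y : sphere (0 : EuclideanSpace ℝ (Fin 3)) 1 => y.1 a * (y.1.ofLp ⨯₃ f.ofLp) b)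
        (volume : Measure (EuclideanSpace ℝ (Fin 3))).toSphere :=
    (by fun_prop : Continuous _).integrable_toSphere
  change ∫ y : sphere (0 : EuclideanSpace ℝ (Fin 3)) 1, Mker y.1.ofLp f.ofLp i j ∂_ = 0
  simp_rw [Mker, cross3_eq_crossProduct, mul_comm (crossProduct _ _ i)]
  rw [integral_const_mul, integral_add (hint i j) (hint j i),
    integral_coord_mul_crossProduct_toSphere, integral_coord_mul_crossProduct_toSphere,
    crossProduct_single_apply_swap f.ofLp i j]
  ring

end
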